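/- arXiv:2311.01641 — 2 statements merged into one kernel-verified Lean document; each statement's English description precedes it below -/
import Mathlib

section
/- With notation as above, the two representations of the PGF G_0 coincide: P_0 ∏_{κ=1}^{K-1} (1 - z_κ ζ_+^{κ-1}(z))/(1 - z_κ ζ_+^κ(z)) = P_0 ∏_{κ=1}^{K-1} (1 - z_κ ζ_-^κ(z))/(1 - z_κ ζ_-^{κ-1}(z)), at all points z where all denominators are nonzero. -/
/-!
If `ζ₊, ζ₋` are the roots of `ζ² - sζ + p`, then `(1 - xζ₊)(1 - xζ₋) = 1 - xs + x²p`.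
Going from level `κ - 1` to level `κ` lowers `s = 1 + r - β_κ` by `z_κ r_{K+1-κ}` and
`p = σ_{K-κ}` by `r_{K+1-κ}`, so at `x = z_κ` the value `1 - xs + x²p` does not change:
`(1 - z_κζ₊^{κ-1})(1 - z_κζ₋^{κ-1}) = (1 - z_κζ₊^κ)(1 - z_κζ₋^κ)`. Cross-multiplying, the two
products agree factor by factor.
-/

open Finset

theorem one_sub_mul_mul_one_sub_mul_of_vieta {R : Type*} [CommRing R] {a b s p : R}
    (hs : a + b = s) (hp : a * b = p) (x : R) :
    (1 - x * a) * (1 - x * b) = 1 - x * s + x ^ 2 * p := by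
  rw [← hs, ← hp]
  ring

theorem one_sub_mul_roots_pred_eq {K : ℕ} {rr σ z β ζp ζm : ℕ → ℝ} {r : ℝ}
    (hσ : ∀ j, σ j = ∑ k ∈ Icc 1 j, rr k)
    (hβ : ∀ κ, β κ = ∑ k ∈ Icc 1 κ, z k * rr (K + 1 - k))
    (hsum : ∀ κ, κ ≤ K - 1 → ζp κ + ζm κ = 1 + r - β κ)
    (hprod : ∀ κ, κ ≤ K - 1 → ζp κ * ζm κ = σ (K - κ))
    {κ : ℕ} (hκ : κ ∈ Icc 1 (K - 1)) :
    (1 - z κ * ζp (κ - 1)) * (1 - z κ * ζm (κ - 1)) =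
      (1 - z κ * ζp κ) * (1 - z κ * ζm κ) := by
  obtain ⟨j, rfl⟩ : ∃ j, κ = j + 1 := ⟨κ - 1, by grind⟩
  have hj : j + 1 ≤ K - 1 := (mem_Icc.1 hκ).2
  have hβ_succ : β (j + 1) = β j + z (j + 1) * rr (K - j) := by
    rw [hβ, hβ, sum_Icc_succ_top (by omega), Nat.add_sub_add_right]
  have hσ_pred : σ (K - j) = σ (K - (j + 1)) + rr (K - j) := by
    rw [show K - j = K - (j + 1) + 1 by omega, hσ, hσ, sum_Icc_succ_top (by omega)]
  rw [Nat.add_sub_cancel,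
    one_sub_mul_mul_one_sub_mul_of_vieta (hsum j (by omega)) (hprod j (by omega)),
    one_sub_mul_mul_one_sub_mul_of_vieta (hsum (j + 1) hj) (hprod (j + 1) hj),
    hβ_succ, hσ_pred]
  ring

theorem stmt_14_general (K : ℕ) (rr : ℕ → ℝ)
    (r : ℝ)
    (σ : ℕ → ℝ) (hσ : ∀ j, σ j = ∑ k ∈ Finset.Icc 1 j, rr k)
    (z : ℕ → ℝ)
    (β : ℕ → ℝ) (hβ : ∀ κ, β κ = ∑ k ∈ Finset.Icc 1 κ, z k * rr (K + 1 - k))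
    (ζp ζm : ℕ → ℝ)
    (hsum : ∀ κ, κ ≤ K - 1 → ζp κ + ζm κ = 1 + r - β κ)
    (hprod : ∀ κ, κ ≤ K - 1 → ζp κ * ζm κ = σ (K - κ))
    (P0 : ℝ)
    (hdenp : ∀ κ ∈ Finset.Icc 1 (K - 1), 1 - z κ * ζp κ ≠ 0)
    (hdenm : ∀ κ ∈ Finset.Icc 1 (K - 1), 1 - z κ * ζm (κ - 1) ≠ 0) :
    P0 * ∏ κ ∈ Finset.Icc 1 (K - 1), (1 - z κ * ζp (κ - 1)) / (1 - z κ * ζp κ) =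
      P0 * ∏ κ ∈ Finset.Icc 1 (K - 1), (1 - z κ * ζm κ) / (1 - z κ * ζm (κ - 1)) := by
  congr 1
  refine prod_congr rfl fun κ hκ => (div_eq_div_iff (hdenp κ hκ) (hdenm κ hκ)).2 ?_
  linear_combination one_sub_mul_roots_pred_eq hσ hβ hsum hprod hκ

theorem stmt_14 (K : ℕ) (hK : 2 ≤ K) (rr : ℕ → ℝ)
    (hpos : ∀ κ ∈ Finset.Icc 1 K, 0 < rr κ)
    (r : ℝ) (hr : r = ∑ κ ∈ Finset.Icc 1 K, rr κ)
    (σ : ℕ → ℝ) (hσ : ∀ j, σ j = ∑ k ∈ Finset.Icc 1 j, rr k)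
    (z : ℕ → ℝ)
    (β : ℕ → ℝ) (hβ : ∀ κ, β κ = ∑ k ∈ Finset.Icc 1 κ, z k * rr (K + 1 - k))
    (ζp ζm : ℕ → ℝ)
    (hsum : ∀ κ, κ ≤ K - 1 → ζp κ + ζm κ = 1 + r - β κ)
    (hprod : ∀ κ, κ ≤ K - 1 → ζp κ * ζm κ = σ (K - κ))
    (P0 : ℝ)
    (hdenp : ∀ κ ∈ Finset.Icc 1 (K - 1), 1 - z κ * ζp κ ≠ 0)
    (hdenm : ∀ κ ∈ Finset.Icc 1 (K - 1), 1 - z κ * ζm (κ - 1) ≠ 0) :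
    P0 * ∏ κ ∈ Finset.Icc 1 (K - 1), (1 - z κ * ζp (κ - 1)) / (1 - z κ * ζp κ) =
      P0 * ∏ κ ∈ Finset.Icc 1 (K - 1), (1 - z κ * ζm κ) / (1 - z κ * ζm (κ - 1)) :=
  stmt_14_general K rr r σ hσ z β hβ ζp ζm hsum hprod P0 hdenp hdenm
end

section
/- Let K ≥ 1, r ∈ (0,1), r_1,…,r_K ≥ 0 with ∑ r_κ = r, and let p : ℕ^K → ℝ≥0 be summable with ∑_{n} p_n = S < ∞. Define the map (M p)_n = (1/(1+r))[∏_j [n_j = 0]·p_n + ∑_{κ=1}^K ( r_κ p_{n - e_κ} + ∏_{j<κ}[n_j=0]·p_{n + e_κ} )], where p_m := 0 if any coordinate of m is negative. Then ∑_n (M p)_n = S, i.e., M preserves the ℓ¹ sum on nonnegative summable arrays. -/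
open Function

theorem stmt_19 (K : ℕ) (hK : 1 ≤ K) (r : ℝ) (hr0 : 0 < r) (hr1 : r < 1)
    (rr : Fin K → ℝ) (hrr : ∀ κ, 0 ≤ rr κ) (hsumr : ∑ κ, rr κ = r)
    (p : (Fin K → ℕ) → ℝ) (hnn : ∀ n, 0 ≤ p n) (hsummable : Summable p)
    (S : ℝ) (hS : ∑' n, p n = S)
    (Mp : (Fin K → ℕ) → ℝ)
    (hM : ∀ n : Fin K → ℕ,
      Mp n = (1 / (1 + r)) *
        ((if ∀ j, n j = 0 then p n else 0) +
          ∑ κ : Fin K,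
            (rr κ * (if n κ = 0 then 0 else p (Function.update n κ (n κ - 1))) +
              (if ∀ j, j < κ → n j = 0 then p (Function.update n κ (n κ + 1)) else 0)))) :
    ∑' n, Mp n = S := by
  classical
  -- shift-up map
  set u : Fin K → (Fin K → ℕ) → (Fin K → ℕ) := fun κ n => Function.update n κ (n κ + 1) with hu
  have huκ : ∀ κ n, u κ n κ = n κ + 1 := by intro κ n; simp [hu]
  have huj : ∀ κ n j, j ≠ κ → u κ n j = n j := by
    intro κ n j hj; simp [hu, Function.update_of_ne hj]
  have uinj : ∀ κ, Function.Injective (u κ) := by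
    intro κ n m h
    funext j
    by_cases hj : j = κ
    · subst hj
      have := congrFun h j
      rw [huκ, huκ] at this; omega
    · have := congrFun h j
      rwa [huj κ n j hj, huj κ m j hj] at this
  have urange : ∀ κ (m : Fin K → ℕ), m κ ≠ 0 → m ∈ Set.range (u κ) := by
    intro κ m hm
    refine ⟨Function.update m κ (m κ - 1), ?_⟩
    funext j
    by_cases hj : j = κ
    · subst hj; rw [huκ]; simp; omega
    · rw [huj κ _ j hj, Function.update_of_ne hj]
  -- the family of boundary indicator functions
  set F : ℕ → (Fin K → ℕ) → ℝ := fun i n => if ∀ j : Fin K, (j : ℕ) < i → n j = 0 then p n else 0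
    with hF
  have hFnn : ∀ i n, 0 ≤ F i n := by
    intro i n; simp only [hF]; split <;> [exact hnn n; exact le_rfl]
  have hFle : ∀ i n, F i n ≤ p n := by
    intro i n; simp only [hF]; split <;> [exact le_rfl; exact hnn n]
  have hFsum : ∀ i, Summable (F i) := fun i =>
    Summable.of_nonneg_of_le (hFnn i) (hFle i) hsummable
  set A : ℕ → ℝ := fun i => ∑' n, F i n with hA
  have hA0 : A 0 = S := by
    rw [hA, ← hS]
    refine tsum_congr fun n => ?_
    simp [hF]
  -- per-κ pieces
  set g : Fin K → (Fin K → ℕ) → ℝ :=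
    fun κ n => if n κ = 0 then 0 else p (Function.update n κ (n κ - 1)) with hg
  set h : Fin K → (Fin K → ℕ) → ℝ :=
    fun κ n => if ∀ j, j < κ → n j = 0 then p (Function.update n κ (n κ + 1)) else 0 with hh
  set G : Fin K → (Fin K → ℕ) → ℝ := fun κ m => if m κ = 0 then 0 else F (κ : ℕ) m with hG
  -- g κ ∘ u κ = p
  have hgu : ∀ κ n, g κ (u κ n) = p n := by
    intro κ n
    have h1 : u κ n κ = n κ + 1 := huκ κ n
    simp only [hg, h1]
    rw [if_neg (by omega)]
    congr 1
    funext j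
    by_cases hj : j = κ
    · subst hj; simp [h1]
    · rw [Function.update_of_ne hj, huj κ n j hj]
  have hgvan : ∀ κ, ∀ m ∉ Set.range (u κ), g κ m = 0 := by
    intro κ m hm
    by_cases h0 : m κ = 0
    · simp [hg, h0]
    · exact absurd (urange κ m h0) hm
  have hgsupp : ∀ κ, Function.support (g κ) ⊆ Set.range (u κ) :=
    fun κ => Function.support_subset_iff'.mpr (hgvan κ)
  have hgsum : ∀ κ, Summable (g κ) := by
    intro κ
    exact ((uinj κ).summable_iff (hgvan κ)).mp (hsummable.congr fun n => (hgu κ n).symm)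
  have hgtsum : ∀ κ, ∑' n, g κ n = S := by
    intro κ
    have h1 : ∑' n, g κ (u κ n) = ∑' m, g κ m := (uinj κ).tsum_eq (hgsupp κ)
    have h2 : ∑' n, g κ (u κ n) = ∑' n, p n := tsum_congr (hgu κ)
    rw [← h1, h2, hS]
  -- h κ = G κ ∘ u κ
  have hhu : ∀ κ n, G κ (u κ n) = h κ n := by
    intro κ n
    have h1 : u κ n κ = n κ + 1 := huκ κ n
    simp only [hG, h1]
    rw [if_neg (by omega)]
    simp only [hF, hh]
    have hcond : (∀ j : Fin K, (j : ℕ) < (κ : ℕ) → u κ n j = 0) ↔ (∀ j, j < κ → n j = 0) := by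
      constructor
      · intro hc j hjκ
        have hjne : j ≠ κ := ne_of_lt hjκ
        rw [← huj κ n j hjne]
        exact hc j (Fin.lt_def.mp hjκ)
      · intro hc j hjκ
        have hjκ' : j < κ := Fin.lt_def.mpr hjκ
        rw [huj κ n j (ne_of_lt hjκ')]
        exact hc j hjκ'
    by_cases hc : ∀ j, j < κ → n j = 0
    · rw [if_pos (hcond.mpr hc), if_pos hc]
    · rw [if_neg (fun hc' => hc (hcond.mp hc')), if_neg hc]
  have hGvan : ∀ κ, ∀ m ∉ Set.range (u κ), G κ m = 0 := by
    intro κ m hm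
    by_cases h0 : m κ = 0
    · simp [hG, h0]
    · exact absurd (urange κ m h0) hm
  have hGnn : ∀ κ m, 0 ≤ G κ m := by
    intro κ m; simp only [hG]; split <;> [exact le_rfl; exact hFnn _ _]
  have hGle : ∀ κ m, G κ m ≤ p m := by
    intro κ m; simp only [hG]; split <;> [exact hnn m; exact hFle _ _]
  have hGsum : ∀ κ, Summable (G κ) :=
    fun κ => Summable.of_nonneg_of_le (hGnn κ) (hGle κ) hsummable
  have hhsum : ∀ κ, Summable (h κ) := by
    intro κ
    have : h κ = G κ ∘ u κ := funext fun n => (hhu κ n).symm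
    rw [this]
    exact (hGsum κ).comp_injective (uinj κ)
  -- G κ = F κ - F (κ+1) pointwise
  have hGdiff : ∀ κ : Fin K, ∀ m, G κ m = F (κ : ℕ) m - F ((κ : ℕ) + 1) m := by
    intro κ m
    have hcond : (∀ j : Fin K, (j : ℕ) < (κ : ℕ) + 1 → m j = 0) ↔
        (∀ j : Fin K, (j : ℕ) < (κ : ℕ) → m j = 0) ∧ m κ = 0 := by
      constructor
      · exact fun hc => ⟨fun j hj => hc j (by omega), hc κ (by omega)⟩
      · rintro ⟨hc, h0⟩ j hj
        rcases Nat.lt_or_ge (j : ℕ) (κ : ℕ) with hlt | hge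
        · exact hc j hlt
        · have : (j : ℕ) = (κ : ℕ) := by omega
          have : j = κ := Fin.ext this
          rw [this]; exact h0
    by_cases h0 : m κ = 0
    · simp only [hG, if_pos h0, hF]
      by_cases hc : ∀ j : Fin K, (j : ℕ) < (κ : ℕ) → m j = 0
      · rw [if_pos hc, if_pos (hcond.mpr ⟨hc, h0⟩)]; ring
      · rw [if_neg hc, if_neg (fun hc' => hc (hcond.mp hc').1)]; ring
    · simp only [hG, if_neg h0, hF]
      rw [if_neg (fun hc' => h0 (hcond.mp hc').2)]
      ring
  have hGtsum : ∀ κ : Fin K, ∑' m, G κ m = A (κ : ℕ) - A ((κ : ℕ) + 1) := by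
    intro κ
    have : ∑' m, G κ m = ∑' m, (F (κ : ℕ) m - F ((κ : ℕ) + 1) m) :=
      tsum_congr (hGdiff κ)
    rw [this, Summable.tsum_sub (hFsum _) (hFsum _)]
  have hGsupp : ∀ κ, Function.support (G κ) ⊆ Set.range (u κ) :=
    fun κ => Function.support_subset_iff'.mpr (hGvan κ)
  have hhtsum : ∀ κ : Fin K, ∑' n, h κ n = A (κ : ℕ) - A ((κ : ℕ) + 1) := by
    intro κ
    have h1 : ∑' n, h κ n = ∑' n, G κ (u κ n) := tsum_congr fun n => (hhu κ n).symm
    rw [h1, (uinj κ).tsum_eq (hGsupp κ), hGtsum κ]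
  -- summability of the combined inner function
  set q : (Fin K → ℕ) → ℝ := fun n =>
    F K n + ∑ κ : Fin K, (rr κ * g κ n + h κ n) with hq
  have hκsum : ∀ κ : Fin K, Summable (fun n => rr κ * g κ n + h κ n) :=
    fun κ => (((hgsum κ).mul_left (rr κ)).add (hhsum κ))
  have hsumfin : Summable (fun n => ∑ κ : Fin K, (rr κ * g κ n + h κ n)) :=
    summable_sum fun κ _ => hκsum κ
  have hqsum : Summable q := (hFsum K).add hsumfin
  have hqtsum : ∑' n, q n = S + r * S := by
    rw [hq]
    rw [Summable.tsum_add (hFsum K) hsumfin]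
    rw [Summable.tsum_finsetSum (fun κ _ => hκsum κ)]
    have hterm : ∀ κ : Fin K, ∑' n, (rr κ * g κ n + h κ n)
        = rr κ * S + (A (κ : ℕ) - A ((κ : ℕ) + 1)) := by
      intro κ
      rw [Summable.tsum_add ((hgsum κ).mul_left (rr κ)) (hhsum κ), tsum_mul_left, hgtsum κ, hhtsum κ]
    rw [Finset.sum_congr rfl (fun κ _ => hterm κ)]
    rw [Finset.sum_add_distrib, ← Finset.sum_mul, hsumr]
    have htel : ∑ κ : Fin K, (A (κ : ℕ) - A ((κ : ℕ) + 1)) = A 0 - A K := by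
      rw [Fin.sum_univ_eq_sum_range (fun i => A i - A (i + 1)) K]
      exact Finset.sum_range_sub' A K
    rw [htel, hA0]
    ring
  -- now finish
  have hMp : ∀ n, Mp n = (1 / (1 + r)) * q n := by
    intro n
    rw [hM n, hq]
    congr 1
    congr 1
    simp only [hF]
    exact if_congr ⟨fun hc j _ => hc j, fun hc j => hc j j.isLt⟩ rfl rfl
  calc ∑' n, Mp n = ∑' n, (1 / (1 + r)) * q n := tsum_congr hMp
    _ = (1 / (1 + r)) * ∑' n, q n := tsum_mul_left
    _ = (1 / (1 + r)) * (S + r * S) := by rw [hqtsum]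
    _ = S := by field_simp
end
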